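/- Let (X,e_X,μ_X) and (Y,e_Y,μ_Y) be H-equivalent NP_2-digital H-spaces. If (X,e_X,μ_X) has a left homotopy-inverse, then (Y,e_Y,μ_Y) has a left homotopy-inverse; if (X,e_X,μ_X) has a right homotopy-inverse, then (Y,e_Y,μ_Y) has a right homotopy-inverse; and if the left and right homotopy-inverses of X are NP_2-homotopic, then the left and right homotopy-inverses of Y so obtained are NP_2-homotopic. -/

import Mathlib

/-- A digital image: a finite set with a reflexive, symmetric adjacency relation
(a finite reflexive graph). -/
structure DigImage where
  carrier : Type
  [fintype : Fintype carrier]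
  adj : carrier → carrier → Prop
  adj_refl : ∀ x, adj x x
  adj_symm : ∀ {x y}, adj x y → adj y x

attribute [instance] DigImage.fintype

/-- `f : (X,κ) → (Y,λ)` is digitally continuous if it preserves adjacency. -/
def DigContinuous (X Y : DigImage) (f : X.carrier → Y.carrier) : Prop :=
  ∀ ⦃a b : X.carrier⦄, X.adj a b → Y.adj (f a) (f b)

/-- The product of two digital images with the normal product adjacency `NP_i`
(for `i ≤ 1` this is `NP_1`; otherwise `NP_2`): two pairs are adjacent iff
their coordinates are adjacent in at most `i` positions and equal elsewhere. -/
def DigImage.prod (i : ℕ) (X Y : DigImage) : DigImage where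
  carrier := X.carrier × Y.carrier
  adj p q :=
    if i ≤ 1 then (p.1 = q.1 ∧ Y.adj p.2 q.2) ∨ (p.2 = q.2 ∧ X.adj p.1 q.1)
    else X.adj p.1 q.1 ∧ Y.adj p.2 q.2
  adj_refl p := by
    split_ifs
    · exact Or.inl ⟨rfl, Y.adj_refl p.2⟩
    · exact ⟨X.adj_refl p.1, Y.adj_refl p.2⟩
  adj_symm {p q} h := by
    split_ifs at h ⊢ with hi
    · rcases h with ⟨h1, h2⟩ | ⟨h1, h2⟩
      · exact Or.inl ⟨h1.symm, Y.adj_symm h2⟩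
      · exact Or.inr ⟨h1.symm, X.adj_symm h2⟩
    · exact ⟨X.adj_symm h.1, Y.adj_symm h.2⟩

/-- The triple product of digital images with the normal product adjacency `NP_i`:
coordinates adjacent in at most `i` positions and equal in all other positions. -/
def DigImage.prod3 (i : ℕ) (X Y Z : DigImage) : DigImage where
  carrier := X.carrier × Y.carrier × Z.carrier
  adj p q :=
    if i ≤ 1 then
      (p.1 = q.1 ∧ p.2.1 = q.2.1 ∧ Z.adj p.2.2 q.2.2) ∨
      (p.1 = q.1 ∧ p.2.2 = q.2.2 ∧ Y.adj p.2.1 q.2.1) ∨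
      (p.2.1 = q.2.1 ∧ p.2.2 = q.2.2 ∧ X.adj p.1 q.1)
    else
      (p.1 = q.1 ∧ Y.adj p.2.1 q.2.1 ∧ Z.adj p.2.2 q.2.2) ∨
      (p.2.1 = q.2.1 ∧ X.adj p.1 q.1 ∧ Z.adj p.2.2 q.2.2) ∨
      (p.2.2 = q.2.2 ∧ X.adj p.1 q.1 ∧ Y.adj p.2.1 q.2.1)
  adj_refl p := by
    split_ifs
    · exact Or.inl ⟨rfl, rfl, Z.adj_refl p.2.2⟩
    · exact Or.inl ⟨rfl, Y.adj_refl p.2.1, Z.adj_refl p.2.2⟩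
  adj_symm {p q} h := by
    split_ifs at h ⊢ with hi
    · rcases h with ⟨h1, h2, h3⟩ | ⟨h1, h2, h3⟩ | ⟨h1, h2, h3⟩
      · exact Or.inl ⟨h1.symm, h2.symm, Z.adj_symm h3⟩
      · exact Or.inr (Or.inl ⟨h1.symm, h2.symm, Y.adj_symm h3⟩)
      · exact Or.inr (Or.inr ⟨h1.symm, h2.symm, X.adj_symm h3⟩)
    · rcases h with ⟨h1, h2, h3⟩ | ⟨h1, h2, h3⟩ | ⟨h1, h2, h3⟩
      · exact Or.inl ⟨h1.symm, Y.adj_symm h2, Z.adj_symm h3⟩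
      · exact Or.inr (Or.inl ⟨h1.symm, X.adj_symm h2, Z.adj_symm h3⟩)
      · exact Or.inr (Or.inr ⟨h1.symm, X.adj_symm h2, Y.adj_symm h3⟩)

/-- The digital interval `[0,m]_ℤ` with the standard adjacency `|a−b| ≤ 1`. -/
def digInterval (m : ℕ) : DigImage where
  carrier := Fin (m + 1)
  adj a b := |(a : ℤ) - (b : ℤ)| ≤ 1
  adj_refl a := by simp
  adj_symm {a b} h := by
    have h' : |(a : ℤ) - (b : ℤ)| ≤ 1 := h
    rw [abs_sub_comm] at h'
    exact h'

/-- `f` and `g` are `NP_i`-digitally homotopic: there is an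
`NP_i`-continuous `H : X × [0,m]_ℤ → Y` with `H(·,0) = f` and `H(·,m) = g`. -/
def DigHomotopic (i : ℕ) (X Y : DigImage) (f g : X.carrier → Y.carrier) : Prop :=
  ∃ (m : ℕ) (H : X.carrier × Fin (m + 1) → Y.carrier),
    DigContinuous (DigImage.prod i X (digInterval m)) Y H ∧
    (∀ x, H (x, 0) = f x) ∧ (∀ x, H (x, Fin.last m) = g x)

/-- An `NP_i`-digital H-space `(X,e,μ)`. -/
structure IsHSpace (i : ℕ) (X : DigImage) (e : X.carrier)
    (μ : X.carrier × X.carrier → X.carrier) : Prop where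
  continuous : DigContinuous (DigImage.prod i X X) X μ
  right_unit : DigHomotopic i X X (fun x => μ (x, e)) id
  left_unit : DigHomotopic i X X (fun x => μ (e, x)) id

/-- H-equivalence of `NP_i`-digital H-spaces. -/
def HSpaceEquiv (i : ℕ) (X : DigImage) (eX : X.carrier)
    (μX : X.carrier × X.carrier → X.carrier)
    (Y : DigImage) (eY : Y.carrier)
    (μY : Y.carrier × Y.carrier → Y.carrier) : Prop :=
  ∃ (f : X.carrier → Y.carrier) (g : Y.carrier → X.carrier),
    DigContinuous X Y f ∧ DigContinuous Y X g ∧ f eX = eY ∧ g eY = eX ∧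
    DigHomotopic i Y Y (f ∘ g) id ∧ DigHomotopic i X X (g ∘ f) id ∧
    DigHomotopic i (DigImage.prod i X X) Y (fun p => f (μX p)) (fun p => μY (f p.1, f p.2)) ∧
    DigHomotopic i (DigImage.prod i Y Y) X (fun p => g (μY p)) (fun p => μX (g p.1, g p.2))

/-- `NP_i`-homotopy equivalence of digital images. -/
def DigHtpyEquiv (i : ℕ) (X Y : DigImage) : Prop :=
  ∃ (f : X.carrier → Y.carrier) (g : Y.carrier → X.carrier),
    DigContinuous X Y f ∧ DigContinuous Y X g ∧
    DigHomotopic i X X (g ∘ f) id ∧ DigHomotopic i Y Y (f ∘ g) id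

/-- A digital image is `NP_i`-irreducible if it is not `NP_i`-homotopy
equivalent to any digital image with fewer points. -/
def DigIrreducible (i : ℕ) (X : DigImage) : Prop :=
  ¬ ∃ Y : DigImage, Fintype.card Y.carrier < Fintype.card X.carrier ∧ DigHtpyEquiv i X Y

/-- A digital image is connected if any two points are joined by a path
of consecutively adjacent points. -/
def DigConnected (X : DigImage) : Prop :=
  ∀ a b : X.carrier, Relation.ReflTransGen X.adj a b

/-- A digital image is `NP_i`-contractible if the identity is `NP_i`-homotopic
to a constant map. -/
def DigContractible (i : ℕ) (X : DigImage) : Prop :=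
  ∃ c : X.carrier, DigHomotopic i X X id (fun _ => c)

/-- An isomorphism of digital images: a continuous bijection with continuous inverse. -/
def IsDigIso (X Y : DigImage) (f : X.carrier → Y.carrier) : Prop :=
  DigContinuous X Y f ∧ ∃ g : Y.carrier → X.carrier,
    DigContinuous Y X g ∧ Function.LeftInverse g f ∧ Function.RightInverse g f

/-- The sub-digital-image on the points satisfying `P`, with the induced adjacency. -/
noncomputable def subImage (X : DigImage) (P : X.carrier → Prop) : DigImage where
  carrier := {x : X.carrier // P x}
  fintype := Fintype.ofFinite _
  adj a b := X.adj a.1 b.1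
  adj_refl a := X.adj_refl a.1
  adj_symm h := X.adj_symm h

/-- The connected component of `e`, as a digital image. -/
noncomputable def componentImage (X : DigImage) (e : X.carrier) : DigImage :=
  subImage X (fun x => Relation.ReflTransGen X.adj e x)

/-- Homotopy-associativity of an `NP_i`-digital multiplication:
`μ∘(id × μ) ≃ᵢ μ∘(μ × id)` as maps `X × X × X → X` with `NP_i` adjacency. -/
def HomotopyAssociative (i : ℕ) (X : DigImage)
    (μ : X.carrier × X.carrier → X.carrier) : Prop :=
  DigHomotopic i (DigImage.prod3 i X X X) X
    (fun p => μ (p.1, μ (p.2.1, p.2.2)))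
    (fun p => μ (μ (p.1, p.2.1), p.2.2))

/-- `α` is a left homotopy-inverse for the H-space `(X,e,μ)`. -/
def LeftHtpyInverse (i : ℕ) (X : DigImage) (e : X.carrier)
    (μ : X.carrier × X.carrier → X.carrier) (α : X.carrier → X.carrier) : Prop :=
  DigContinuous X X α ∧ DigContinuous X X (fun x => μ (α x, x)) ∧
  DigHomotopic i X X (fun x => μ (α x, x)) (fun _ => e)

/-- `β` is a right homotopy-inverse for the H-space `(X,e,μ)`. -/
def RightHtpyInverse (i : ℕ) (X : DigImage) (e : X.carrier)
    (μ : X.carrier × X.carrier → X.carrier) (β : X.carrier → X.carrier) : Prop :=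
  DigContinuous X X β ∧ DigContinuous X X (fun x => μ (x, β x)) ∧
  DigHomotopic i X X (fun x => μ (x, β x)) (fun _ => e)

/-!
If `f : X → Y`, `g : Y → X` form an H-equivalence and `α` is a left homotopy-inverse of `X`,
then `τ = f ∘ α ∘ g` is one of `Y`:
`μY (τ y, y) ≃ μY (τ y, f (g y)) ≃ f (μX (α (g y), g y)) ≃ f eX = eY`,
using `f ∘ g ≃ id` and that `f` is an H-map up to homotopy. Right homotopy-inverses are the
left ones of the opposite multiplication `μ ∘ swap`, and `α ≃ β` gives
`f ∘ α ∘ g ≃ f ∘ β ∘ g`.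
-/

namespace DigImage

variable {i : ℕ} {X Y : DigImage} {p q : X.carrier × Y.carrier}

lemma prod_adj : (prod i X Y).adj p q ↔
    if i ≤ 1 then (p.1 = q.1 ∧ Y.adj p.2 q.2) ∨ (p.2 = q.2 ∧ X.adj p.1 q.1)
    else X.adj p.1 q.1 ∧ Y.adj p.2 q.2 :=
  Iff.rfl

lemma prod_two_adj : (prod 2 X Y).adj p q ↔ X.adj p.1 q.1 ∧ Y.adj p.2 q.2 := by
  simp [prod]

lemma adj_fst_of_prod_adj (h : (prod i X Y).adj p q) : X.adj p.1 q.1 := by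
  rw [prod_adj] at h
  split_ifs at h
  · rcases h with ⟨h₁, -⟩ | ⟨-, h₁⟩
    · exact h₁ ▸ X.adj_refl _
    · exact h₁
  · exact h.1

lemma adj_snd_of_prod_adj (h : (prod i X Y).adj p q) : Y.adj p.2 q.2 := by
  rw [prod_adj] at h
  split_ifs at h
  · rcases h with ⟨-, h₂⟩ | ⟨h₂, -⟩
    · exact h₂
    · exact h₂ ▸ Y.adj_refl _
  · exact h.2

end DigImage

lemma digInterval_adj_iff {m : ℕ} {a b : Fin (m + 1)} :
    (digInterval m).adj a b ↔ (a : ℕ) ≤ b + 1 ∧ (b : ℕ) ≤ a + 1 := by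
  change |(a : ℤ) - b| ≤ 1 ↔ _
  rw [abs_le]
  omega

def glueAt {α β : Type*} {m : ℕ} (k : Fin (m + 1)) (F₁ F₂ : α × Fin (m + 1) → β) :
    α × Fin (m + 1) → β :=
  fun p => if p.2 ≤ k then F₁ p else F₂ p

section glueAt

variable {α β : Type*} {m : ℕ} {k : Fin (m + 1)} {F₁ F₂ : α × Fin (m + 1) → β}
  {p : α × Fin (m + 1)}

lemma glueAt_of_le (hp : p.2 ≤ k) : glueAt k F₁ F₂ p = F₁ p :=
  if_pos hp

lemma glueAt_of_ge (hk : ∀ a, F₁ (a, k) = F₂ (a, k)) (hp : k ≤ p.2) :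
    glueAt k F₁ F₂ p = F₂ p := by
  unfold glueAt
  split_ifs with hp'
  · obtain ⟨a, t⟩ := p
    obtain rfl : t = k := le_antisymm hp' hp
    exact hk a
  · rfl

end glueAt

namespace DigContinuous

variable {i : ℕ} {W X X' Y Y' Z : DigImage}

lemma id : DigContinuous X X id :=
  fun _ _ h => h

lemma comp {g : Y.carrier → Z.carrier} {f : X.carrier → Y.carrier}
    (hg : DigContinuous Y Z g) (hf : DigContinuous X Y f) : DigContinuous X Z (g ∘ f) :=
  fun _ _ h => hg (hf h)

lemma fst : DigContinuous (DigImage.prod i X Y) X Prod.fst :=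
  fun _ _ => DigImage.adj_fst_of_prod_adj

lemma prodMk {f : W.carrier → X.carrier} {g : W.carrier → Y.carrier}
    (hf : DigContinuous W X f) (hg : DigContinuous W Y g) :
    DigContinuous W (DigImage.prod 2 X Y) (fun w => (f w, g w)) :=
  fun _ _ h => DigImage.prod_two_adj.mpr ⟨hf h, hg h⟩

lemma prodMap {f : X.carrier → X'.carrier} {g : Y.carrier → Y'.carrier}
    (hf : DigContinuous X X' f) (hg : DigContinuous Y Y' g) :
    DigContinuous (DigImage.prod i X Y) (DigImage.prod i X' Y') (Prod.map f g) := by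
  intro p q h
  replace h := DigImage.prod_adj.mp h
  refine DigImage.prod_adj.mpr ?_
  split_ifs at h ⊢
  · rcases h with ⟨h₁, h₂⟩ | ⟨h₂, h₁⟩
    · exact Or.inl ⟨congrArg f h₁, hg h₂⟩
    · exact Or.inr ⟨congrArg g h₂, hf h₁⟩
  · exact ⟨hf h.1, hg h.2⟩

lemma swap : DigContinuous (DigImage.prod i X Y) (DigImage.prod i Y X) Prod.swap := by
  intro p q h
  replace h := DigImage.prod_adj.mp h
  refine DigImage.prod_adj.mpr ?_
  split_ifs at h ⊢
  · exact h.symm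
  · exact h.symm

lemma rev {m : ℕ} :
    DigContinuous (digInterval m) (digInterval m) (Fin.rev : Fin (m + 1) → Fin (m + 1)) := by
  intro a b h
  replace h := digInterval_adj_iff.mp h
  refine digInterval_adj_iff.mpr ?_
  have ha := Fin.val_rev (n := m + 1) a
  have hb := Fin.val_rev (n := m + 1) b
  omega

lemma clamp_comp {m n : ℕ} {φ : ℕ → ℕ} (hφ : ∀ a b, a ≤ b + 1 → φ a ≤ φ b + 1) :
    DigContinuous (digInterval m) (digInterval n) (fun t : Fin (m + 1) => Fin.clamp (φ t) n) := by
  intro (a : Fin (m + 1)) (b : Fin (m + 1)) h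
  replace h := digInterval_adj_iff.mp h
  refine digInterval_adj_iff.mpr ?_
  simp only [Fin.coe_clamp]
  have := hφ a b h.1
  have := hφ b a h.2
  omega

/-- Adjacent points of a cylinder `X × [0,m]_ℤ` never lie strictly on opposite sides of a
slice `X × {k}`. -/
lemma glueAt {m : ℕ} {k : Fin (m + 1)} {F₁ F₂ : X.carrier × Fin (m + 1) → Y.carrier}
    (h₁ : DigContinuous (DigImage.prod i X (digInterval m)) Y F₁)
    (h₂ : DigContinuous (DigImage.prod i X (digInterval m)) Y F₂)
    (hk : ∀ x, F₁ (x, k) = F₂ (x, k)) :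
    DigContinuous (DigImage.prod i X (digInterval m)) Y (glueAt k F₁ F₂) := by
  intro (p : X.carrier × Fin (m + 1)) (q : X.carrier × Fin (m + 1)) h
  have ht := digInterval_adj_iff.mp (DigImage.adj_snd_of_prod_adj h)
  have hside : (p.2 ≤ k ∧ q.2 ≤ k) ∨ (k ≤ p.2 ∧ k ≤ q.2) := by
    simp only [Fin.le_def]
    omega
  rcases hside with ⟨hp, hq⟩ | ⟨hp, hq⟩
  · rw [glueAt_of_le hp, glueAt_of_le hq]
    exact h₁ h
  · rw [glueAt_of_ge hk hp, glueAt_of_ge hk hq]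
    exact h₂ h

end DigContinuous

lemma Fin.clamp_zero (m : ℕ) : Fin.clamp 0 m = 0 :=
  rfl

namespace DigHomotopic

variable {i : ℕ} {W X Y Z : DigImage} {f g h : X.carrier → Y.carrier}

lemma symm (hfg : DigHomotopic i X Y f g) : DigHomotopic i X Y g f := by
  obtain ⟨m, H, hH, hH₀, hH₁⟩ := hfg
  refine ⟨m, H ∘ Prod.map id Fin.rev, hH.comp (.prodMap .id .rev), fun x => ?_, fun x => ?_⟩
  · simpa using hH₁ x
  · simpa using hH₀ x

lemma trans (hfg : DigHomotopic i X Y f g) (hgh : DigHomotopic i X Y g h) :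
    DigHomotopic i X Y f h := by
  obtain ⟨m₁, H₁, hH₁, hH₁₀, hH₁₁⟩ := hfg
  obtain ⟨m₂, H₂, hH₂, hH₂₀, hH₂₁⟩ := hgh
  let F₁ := H₁ ∘ Prod.map id (fun t : Fin (m₁ + m₂ + 1) => Fin.clamp t m₁)
  let F₂ := H₂ ∘ Prod.map id (fun t : Fin (m₁ + m₂ + 1) => Fin.clamp (t - m₁) m₂)
  have hF₁ : DigContinuous (DigImage.prod i X (digInterval (m₁ + m₂))) Y F₁ :=
    hH₁.comp (.prodMap .id (.clamp_comp (φ := fun t => t) (by omega)))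
  have hF₂ : DigContinuous (DigImage.prod i X (digInterval (m₁ + m₂))) Y F₂ :=
    hH₂.comp (.prodMap .id (.clamp_comp (φ := fun t => t - m₁) (by omega)))
  have hk : ∀ x, F₁ (x, ⟨m₁, by omega⟩) = F₂ (x, ⟨m₁, by omega⟩) := fun x => by
    simp [F₁, F₂, Fin.clamp_eq_last, hH₁₁, hH₂₀, Fin.clamp_zero]
  refine ⟨m₁ + m₂, glueAt _ F₁ F₂, hF₁.glueAt hF₂ hk, fun x => ?_, fun x => ?_⟩
  · rw [glueAt_of_le (Fin.zero_le _)]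
    simp [F₁, Fin.clamp_zero, hH₁₀]
  · rw [glueAt_of_ge hk (Fin.le_last _)]
    simp [F₂, Fin.clamp_eq_last, hH₂₁]

lemma postcomp {k : Y.carrier → Z.carrier} (hk : DigContinuous Y Z k)
    (hfg : DigHomotopic i X Y f g) : DigHomotopic i X Z (k ∘ f) (k ∘ g) := by
  obtain ⟨m, H, hH, hH₀, hH₁⟩ := hfg
  exact ⟨m, k ∘ H, hk.comp hH, fun x => congrArg k (hH₀ x), fun x => congrArg k (hH₁ x)⟩

lemma precomp {k : W.carrier → X.carrier} (hk : DigContinuous W X k)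
    (hfg : DigHomotopic i X Y f g) : DigHomotopic i W Y (f ∘ k) (g ∘ k) := by
  obtain ⟨m, H, hH, hH₀, hH₁⟩ := hfg
  exact ⟨m, H ∘ Prod.map k id, hH.comp (.prodMap hk .id),
    fun w => hH₀ (k w), fun w => hH₁ (k w)⟩

lemma prodMk_left {f g : X.carrier → Y.carrier} {k : X.carrier → Z.carrier}
    (hk : DigContinuous X Z k) (hfg : DigHomotopic 2 X Y f g) :
    DigHomotopic 2 X (DigImage.prod 2 Z Y) (fun x => (k x, f x)) (fun x => (k x, g x)) := by
  obtain ⟨m, H, hH, hH₀, hH₁⟩ := hfg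
  exact ⟨m, fun p => (k p.1, H p), (hk.comp .fst).prodMk hH,
    fun x => congrArg (k x, ·) (hH₀ x), fun x => congrArg (k x, ·) (hH₁ x)⟩

end DigHomotopic

instance {i : ℕ} {X Y : DigImage} :
    Trans (DigHomotopic i X Y) (DigHomotopic i X Y) (DigHomotopic i X Y) :=
  ⟨DigHomotopic.trans⟩

section transfer

variable {X Y : DigImage} {eX : X.carrier} {eY : Y.carrier}
  {μX : X.carrier × X.carrier → X.carrier} {μY : Y.carrier × Y.carrier → Y.carrier}
  {f : X.carrier → Y.carrier} {g : Y.carrier → X.carrier}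

theorem LeftHtpyInverse.transfer (hμY : DigContinuous (DigImage.prod 2 Y Y) Y μY)
    (hf : DigContinuous X Y f) (hg : DigContinuous Y X g) (hfe : f eX = eY)
    (hfg : DigHomotopic 2 Y Y (f ∘ g) id)
    (hmu : DigHomotopic 2 (DigImage.prod 2 X X) Y (fun p => f (μX p))
      (fun p => μY (f p.1, f p.2)))
    {α : X.carrier → X.carrier} (hα : LeftHtpyInverse 2 X eX μX α) :
    LeftHtpyInverse 2 Y eY μY (f ∘ α ∘ g) := by
  obtain ⟨hα, -, hαe⟩ := hα
  have hτ : DigContinuous Y Y (f ∘ α ∘ g) := hf.comp (hα.comp hg)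
  refine ⟨hτ, hμY.comp (hτ.prodMk .id), ?_⟩
  calc DigHomotopic 2 Y Y (fun y => μY (f (α (g y)), y)) (fun y => μY (f (α (g y)), f (g y))) :=
        ((hfg.prodMk_left hτ).postcomp hμY).symm
    DigHomotopic 2 Y Y _ (fun y => f (μX (α (g y), g y))) :=
        (hmu.precomp ((hα.comp hg).prodMk hg)).symm
    DigHomotopic 2 Y Y _ (fun _ => eY) := hfe ▸ (hαe.precomp hg).postcomp hf

theorem RightHtpyInverse.transfer (hμY : DigContinuous (DigImage.prod 2 Y Y) Y μY)
    (hf : DigContinuous X Y f) (hg : DigContinuous Y X g) (hfe : f eX = eY)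
    (hfg : DigHomotopic 2 Y Y (f ∘ g) id)
    (hmu : DigHomotopic 2 (DigImage.prod 2 X X) Y (fun p => f (μX p))
      (fun p => μY (f p.1, f p.2)))
    {β : X.carrier → X.carrier} (hβ : RightHtpyInverse 2 X eX μX β) :
    RightHtpyInverse 2 Y eY μY (f ∘ β ∘ g) :=
  LeftHtpyInverse.transfer (μX := μX ∘ Prod.swap) (μY := μY ∘ Prod.swap)
    (hμY.comp .swap) hf hg hfe hfg (hmu.precomp .swap) hβ

end transfer

theorem hequiv_homotopy_inverses_general
    (X : DigImage) (eX : X.carrier) (μX : X.carrier × X.carrier → X.carrier)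
    (Y : DigImage) (eY : Y.carrier) (μY : Y.carrier × Y.carrier → Y.carrier)
    (hY : IsHSpace 2 Y eY μY)
    (heq : HSpaceEquiv 2 X eX μX Y eY μY) :
    ((∃ α, LeftHtpyInverse 2 X eX μX α) → ∃ τ, LeftHtpyInverse 2 Y eY μY τ) ∧
    ((∃ β, RightHtpyInverse 2 X eX μX β) → ∃ σ, RightHtpyInverse 2 Y eY μY σ) ∧
    (∀ α β, LeftHtpyInverse 2 X eX μX α → RightHtpyInverse 2 X eX μX β →
      DigHomotopic 2 X X α β →
      ∃ τ σ, LeftHtpyInverse 2 Y eY μY τ ∧ RightHtpyInverse 2 Y eY μY σ ∧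
        DigHomotopic 2 Y Y τ σ) := by
  obtain ⟨f, g, hf, hg, hfe, -, hfg, -, hmu, -⟩ := heq
  have left := fun {α} => LeftHtpyInverse.transfer (α := α) hY.continuous hf hg hfe hfg hmu
  have right := fun {β} => RightHtpyInverse.transfer (β := β) hY.continuous hf hg hfe hfg hmu
  refine ⟨fun ⟨_, hα⟩ => ⟨_, left hα⟩, fun ⟨_, hβ⟩ => ⟨_, right hβ⟩,
    fun _ _ hα hβ hαβ => ⟨_, _, left hα, right hβ, ?_⟩⟩
  exact (hαβ.precomp hg).postcomp hf

/-- H-equivalence of `NP_2`-digital H-spaces preserves the existence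
of left and right homotopy-inverses, and if the left and right homotopy-inverses
of `X` are `NP_2`-homotopic then the ones obtained for `Y` are `NP_2`-homotopic. -/
theorem hequiv_homotopy_inverses
    (X : DigImage) (eX : X.carrier) (μX : X.carrier × X.carrier → X.carrier)
    (Y : DigImage) (eY : Y.carrier) (μY : Y.carrier × Y.carrier → Y.carrier)
    (hX : IsHSpace 2 X eX μX) (hY : IsHSpace 2 Y eY μY)
    (heq : HSpaceEquiv 2 X eX μX Y eY μY) :
    ((∃ α, LeftHtpyInverse 2 X eX μX α) → ∃ τ, LeftHtpyInverse 2 Y eY μY τ) ∧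
    ((∃ β, RightHtpyInverse 2 X eX μX β) → ∃ σ, RightHtpyInverse 2 Y eY μY σ) ∧
    (∀ α β, LeftHtpyInverse 2 X eX μX α → RightHtpyInverse 2 X eX μX β →
      DigHomotopic 2 X X α β →
      ∃ τ σ, LeftHtpyInverse 2 Y eY μY τ ∧ RightHtpyInverse 2 Y eY μY σ ∧
        DigHomotopic 2 Y Y τ σ) :=
  hequiv_homotopy_inverses_general X eX μX Y eY μY hY heq
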